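/- arXiv:2501.04216 — 7 statements merged into one kernel-verified Lean document; each statement's English description precedes it below -/
import Mathlib

section
/- Let A be a finite set, u, v : A → ℝ≥0, and let N, w ≥ 0 be reals with Σ_{a∈A} u(a) ≤ N, Σ_{a∈A} v(a) ≤ N, and w ≤ N. Then Σ_{a∈A} min{u(a)·v(a), w} ≤ N^(3/2). -/
theorem sum_min_mul_le_rpow {A : Type*} (s : Finset A) (u v : A → ℝ) (w N : ℝ)
    (hu : ∀ a ∈ s, 0 ≤ u a) (hv : ∀ a ∈ s, 0 ≤ v a)
    (hw : 0 ≤ w) (hN : 0 ≤ N)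
    (hsu : ∑ a ∈ s, u a ≤ N) (hsv : ∑ a ∈ s, v a ≤ N) (hwN : w ≤ N) :
    ∑ a ∈ s, min (u a * v a) w ≤ N ^ ((3 : ℝ) / 2) := by
  have step1 : ∑ a ∈ s, min (u a * v a) w ≤
      Real.sqrt w * ∑ a ∈ s, Real.sqrt (u a * v a) := by
    rw [Finset.mul_sum]
    refine Finset.sum_le_sum fun a ha => ?_
    have hx : 0 ≤ u a * v a := mul_nonneg (hu a ha) (hv a ha)
    have hmin : 0 ≤ min (u a * v a) w := le_min hx hw
    calc min (u a * v a) w ≤ Real.sqrt (u a * v a * w) := by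
          rw [Real.le_sqrt hmin]
          calc min (u a * v a) w ^ 2 = min (u a * v a) w * min (u a * v a) w := sq _
            _ ≤ u a * v a * w := mul_le_mul (min_le_left _ _) (min_le_right _ _) hmin hx
          exact mul_nonneg hx hw
      _ = Real.sqrt w * Real.sqrt (u a * v a) := by
          rw [Real.sqrt_mul hx, mul_comm]
  have hsum0 : 0 ≤ ∑ a ∈ s, Real.sqrt (u a * v a) :=
    Finset.sum_nonneg fun a _ => Real.sqrt_nonneg _
  have cs : (∑ a ∈ s, Real.sqrt (u a * v a)) ^ 2 ≤ (∑ a ∈ s, u a) * ∑ a ∈ s, v a :=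
    Finset.sum_sq_le_sum_mul_sum_of_sq_eq_mul s hu hv fun a ha =>
      Real.sq_sqrt (mul_nonneg (hu a ha) (hv a ha))
  have step2 : ∑ a ∈ s, Real.sqrt (u a * v a) ≤ N := by
    rw [← pow_le_pow_iff_left₀ hsum0 hN (two_ne_zero)]
    calc (∑ a ∈ s, Real.sqrt (u a * v a)) ^ 2 ≤ (∑ a ∈ s, u a) * ∑ a ∈ s, v a := cs
      _ ≤ N * N := mul_le_mul hsu hsv (Finset.sum_nonneg hv) hN
      _ = N ^ 2 := (sq N).symm
  have hrpow : N ^ ((3 : ℝ) / 2) = Real.sqrt N * N := by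
    rw [Real.sqrt_eq_rpow, show (3 : ℝ) / 2 = 1 / 2 + 1 by norm_num,
      Real.rpow_add' hN (by norm_num), Real.rpow_one]
  calc ∑ a ∈ s, min (u a * v a) w ≤ Real.sqrt w * ∑ a ∈ s, Real.sqrt (u a * v a) := step1
    _ ≤ Real.sqrt N * N := by
        exact mul_le_mul (Real.sqrt_le_sqrt hwN) step2 hsum0 (Real.sqrt_nonneg N)
    _ = N ^ ((3 : ℝ) / 2) := hrpow.symm
end

section
/- Let A and B be types, S a finite subset of A × B, and f : B → ℝ≥0, g : A → ℝ≥0 functions. Then Σ_{(a,b)∈S} min{f(b), g(a)} ≤ √(|S| · (Σ_{b} f(b)) · (Σ_{a} g(a))), where the sums of f and g are over the (finite supports of the) projections of S. -/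
theorem sum_min_le_sqrt_card_mul {A B : Type*} [DecidableEq A] [DecidableEq B]
    (S : Finset (A × B)) (f : B → ℝ) (g : A → ℝ)
    (hf : ∀ b, 0 ≤ f b) (hg : ∀ a, 0 ≤ g a) :
    ∑ p ∈ S, min (f p.2) (g p.1) ≤
      Real.sqrt ((S.card : ℝ) * (∑ b ∈ S.image Prod.snd, f b) *
        (∑ a ∈ S.image Prod.fst, g a)) := by
  have h1 : ∑ p ∈ S, min (f p.2) (g p.1) ≤ ∑ p ∈ S, Real.sqrt (f p.2 * g p.1) := by
    refine Finset.sum_le_sum fun p _ => ?_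
    have hm : 0 ≤ min (f p.2) (g p.1) := le_min (hf _) (hg _)
    have : min (f p.2) (g p.1) = Real.sqrt (min (f p.2) (g p.1) * min (f p.2) (g p.1)) := by
      rw [Real.sqrt_mul_self hm]
    rw [this]
    exact Real.sqrt_le_sqrt (mul_le_mul (min_le_left _ _) (min_le_right _ _) hm (hf _))
  have h2 : ∑ p ∈ S, Real.sqrt (f p.2 * g p.1) ≤
      Real.sqrt ((S.card : ℝ) * ∑ p ∈ S, f p.2 * g p.1) := by
    have hcs2 := Finset.sum_mul_sq_le_sq_mul_sq S (fun _ => (1 : ℝ))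
      (fun p => Real.sqrt (f p.2 * g p.1))
    simp only [one_mul, one_pow] at hcs2
    have hsq : ∀ p ∈ S, Real.sqrt (f p.2 * g p.1) ^ 2 = f p.2 * g p.1 := fun p _ =>
      Real.sq_sqrt (mul_nonneg (hf _) (hg _))
    rw [Finset.sum_congr rfl hsq, Finset.sum_const, nsmul_eq_mul, mul_one] at hcs2
    have hnn : 0 ≤ ∑ p ∈ S, Real.sqrt (f p.2 * g p.1) :=
      Finset.sum_nonneg fun p _ => Real.sqrt_nonneg _
    calc ∑ p ∈ S, Real.sqrt (f p.2 * g p.1)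
        = Real.sqrt ((∑ p ∈ S, Real.sqrt (f p.2 * g p.1)) ^ 2) := by
          rw [Real.sqrt_sq hnn]
      _ ≤ Real.sqrt ((S.card : ℝ) * ∑ p ∈ S, f p.2 * g p.1) := Real.sqrt_le_sqrt hcs2
  have h3 : ∑ p ∈ S, f p.2 * g p.1 ≤
      (∑ b ∈ S.image Prod.snd, f b) * (∑ a ∈ S.image Prod.fst, g a) := by
    rw [Finset.sum_mul_sum]
    have := Finset.sum_le_sum_of_subset_of_nonneg
      (s := S) (t := (S.image Prod.fst) ×ˢ (S.image Prod.snd))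
      (f := fun p => f p.2 * g p.1)
      (fun p hp => Finset.mem_product.2 ⟨Finset.mem_image_of_mem _ hp,
        Finset.mem_image_of_mem _ hp⟩)
      (fun p _ _ => mul_nonneg (hf _) (hg _))
    refine this.trans ?_
    rw [Finset.sum_product]
    apply le_of_eq
    rw [Finset.sum_comm]
  refine h1.trans (h2.trans (Real.sqrt_le_sqrt ?_))
  rw [mul_assoc]
  exact mul_le_mul_of_nonneg_left h3 (Nat.cast_nonneg _)
end

section
/- Let A, B, C be types and let R₁ ⊆ B × C, R₂ ⊆ A × C, R₃ ⊆ A × B be finite sets. Define the triangle join T = {(a,b,c) ∈ A × B × C : (b,c) ∈ R₁ ∧ (a,c) ∈ R₂ ∧ (a,b) ∈ R₃}. Then |T| ≤ √(|R₁| · |R₂| · |R₃|). -/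
/-!
Slice the join by the first coordinate `a`. The slice `T_a` injects both into `R₁` and into
`R₂(a) × R₃(a)`, the fibres of `R₂` and `R₃` over `a`, so `|T_a| ≤ √|R₁| · √(|R₂(a)| |R₃(a)|)`.
Summing over `a` and applying Cauchy–Schwarz gives
`|T| ≤ √|R₁| · √(∑ |R₂(a)|) · √(∑ |R₃(a)|) ≤ √(|R₁| |R₂| |R₃|)`.
-/

open Finset

theorem Finset.sum_le_sqrt_mul_sum_mul_sum {ι : Type*} (s : Finset ι) {n y z : ι → ℝ} {x : ℝ}
    (hy : ∀ i, 0 ≤ y i) (hz : ∀ i, 0 ≤ z i) (hn : ∀ i ∈ s, 0 ≤ n i)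
    (hnx : ∀ i ∈ s, n i ≤ x) (hnyz : ∀ i ∈ s, n i ≤ y i * z i) :
    ∑ i ∈ s, n i ≤ √(x * (∑ i ∈ s, y i) * ∑ i ∈ s, z i) := by
  have hx : ∀ i ∈ s, 0 ≤ x := fun i hi => (hn i hi).trans (hnx i hi)
  have termwise : ∀ i ∈ s, n i ≤ √x * (√(y i) * √(z i)) := fun i hi => by
    rw [← Real.sqrt_mul (hy i), ← Real.sqrt_mul (hx i hi), Real.le_sqrt (hn i hi)
      (mul_nonneg (hx i hi) (mul_nonneg (hy i) (hz i))), sq]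
    exact mul_le_mul (hnx i hi) (hnyz i hi) (hn i hi) (hx i hi)
  calc ∑ i ∈ s, n i ≤ ∑ i ∈ s, √x * (√(y i) * √(z i)) := sum_le_sum termwise
    _ = √x * ∑ i ∈ s, √(y i) * √(z i) := (mul_sum ..).symm
    _ ≤ √x * (√(∑ i ∈ s, y i) * √(∑ i ∈ s, z i)) :=
      mul_le_mul_of_nonneg_left (Real.sum_sqrt_mul_sqrt_le s hy hz) (Real.sqrt_nonneg x)
    _ = √(x * (∑ i ∈ s, y i) * ∑ i ∈ s, z i) := by
      rw [mul_assoc, Real.sqrt_mul' x (mul_nonneg (sum_nonneg fun i _ => hy i)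
        (sum_nonneg fun i _ => hz i)), Real.sqrt_mul' _ (sum_nonneg fun i _ => hz i)]

theorem Finset.sum_card_fiberwise_le_card {α κ : Type*} [DecidableEq κ] (s : Finset α)
    (t : Finset κ) (g : α → κ) : ∑ j ∈ t, #{i ∈ s | g i = j} ≤ #s :=
  (sum_card_fiberwise_eq_card_filter s t g).trans_le (card_filter_le _ _)

section TriangleJoin

variable {A B C : Type*} [DecidableEq A] [DecidableEq B] [DecidableEq C]
  (R₁ : Finset (B × C)) (R₂ : Finset (A × C)) (R₃ : Finset (A × B))

/-- Restricting the first coordinate to the first projection of `R₂` loses no triple and makes the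
join a finset. -/
def triangleJoin : Finset (A × B × C) :=
  {p ∈ R₂.image Prod.fst ×ˢ R₁ | (p.1, p.2.2) ∈ R₂ ∧ (p.1, p.2.1) ∈ R₃}

def triangleJoinSlice (a : A) : Finset (B × C) :=
  {bc ∈ R₁ | (a, bc.2) ∈ R₂ ∧ (a, bc.1) ∈ R₃}

theorem coe_triangleJoin :
    (triangleJoin R₁ R₂ R₃ : Set (A × B × C)) =
      {p | (p.2.1, p.2.2) ∈ R₁ ∧ (p.1, p.2.2) ∈ R₂ ∧ (p.1, p.2.1) ∈ R₃} := by
  ext ⟨a, b, c⟩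
  simp only [triangleJoin, coe_filter, mem_product, mem_image, Set.mem_ofPred_eq]
  exact ⟨fun ⟨⟨_, h₁⟩, h₂, h₃⟩ => ⟨h₁, h₂, h₃⟩,
    fun ⟨h₁, h₂, h₃⟩ => ⟨⟨⟨(a, c), h₂, rfl⟩, h₁⟩, h₂, h₃⟩⟩

theorem card_triangleJoin :
    #(triangleJoin R₁ R₂ R₃) = ∑ a ∈ R₂.image Prod.fst, #(triangleJoinSlice R₁ R₂ R₃ a) := by
  simp only [triangleJoin, triangleJoinSlice, card_filter, sum_product]

theorem card_triangleJoinSlice_le_mul (a : A) :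
    #(triangleJoinSlice R₁ R₂ R₃ a) ≤ #{q ∈ R₂ | q.1 = a} * #{q ∈ R₃ | q.1 = a} := by
  rw [← card_product]
  refine card_le_card_of_injOn (fun bc => ((a, bc.2), (a, bc.1))) ?_ ?_
  · intro bc hbc
    simp only [triangleJoinSlice, coe_filter, Set.mem_ofPred_eq] at hbc
    simp [hbc.2.1, hbc.2.2]
  · intro bc _ bc' _ h
    simp only [Prod.mk.injEq, true_and] at h
    exact Prod.ext h.2 h.1

end TriangleJoin

theorem triangle_join_agm {A B C : Type*}
    (R₁ : Finset (B × C)) (R₂ : Finset (A × C)) (R₃ : Finset (A × B)) :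
    let T : Set (A × B × C) :=
      {p | (p.2.1, p.2.2) ∈ R₁ ∧ (p.1, p.2.2) ∈ R₂ ∧ (p.1, p.2.1) ∈ R₃}
    T.Finite ∧
      (T.ncard : ℝ) ≤ Real.sqrt ((R₁.card : ℝ) * R₂.card * R₃.card) := by
  classical
  simp only [← coe_triangleJoin R₁ R₂ R₃, Set.ncard_coe_finset]
  refine ⟨finite_toSet _, ?_⟩
  rw [card_triangleJoin, Nat.cast_sum]
  generalize R₂.image Prod.fst = S
  have fibres₂ : ∑ a ∈ S, (#{q ∈ R₂ | q.1 = a} : ℝ) ≤ #R₂ := by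
    exact_mod_cast sum_card_fiberwise_le_card R₂ S Prod.fst
  have fibres₃ : ∑ a ∈ S, (#{q ∈ R₃ | q.1 = a} : ℝ) ≤ #R₃ := by
    exact_mod_cast sum_card_fiberwise_le_card R₃ S Prod.fst
  calc ∑ a ∈ S, (#(triangleJoinSlice R₁ R₂ R₃ a) : ℝ)
      ≤ √(#R₁ * (∑ a ∈ S, (#{q ∈ R₂ | q.1 = a} : ℝ)) * ∑ a ∈ S, (#{q ∈ R₃ | q.1 = a} : ℝ)) :=
        sum_le_sqrt_mul_sum_mul_sum S (fun _ => Nat.cast_nonneg _) (fun _ => Nat.cast_nonneg _)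
          (fun _ _ => Nat.cast_nonneg _)
          (fun a _ => by exact_mod_cast card_filter_le _ _)
          (fun a _ => by exact_mod_cast card_triangleJoinSlice_le_mul R₁ R₂ R₃ a)
    _ ≤ √(#R₁ * #R₂ * #R₃) := by gcongr
end

section
/- Let A, B, C be types and S a finite subset of A × B × C. Then |S|² ≤ |π_{AB} S| · |π_{BC} S| · |π_{AC} S|, where π_{AB} S = {(a,b) : ∃c, (a,b,c) ∈ S} and similarly for the other projections. -/
open Finset

theorem loomis_whitney_three {A B C : Type*} [DecidableEq A] [DecidableEq B]
    [DecidableEq C] (S : Finset (A × B × C)) :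
    S.card ^ 2 ≤
      (S.image (fun p => (p.1, p.2.1))).card *
        (S.image (fun p => (p.2.1, p.2.2))).card *
        (S.image (fun p => (p.1, p.2.2))).card := by
  classical
  set f1 : A × B × C → A × B := fun p => (p.1, p.2.1) with hf1
  set AB := S.image f1 with hAB
  set BC := S.image (fun p => (p.2.1, p.2.2)) with hBC
  set AC := S.image (fun p => (p.1, p.2.2)) with hAC
  have hmem : ∀ x ∈ S, f1 x ∈ AB := fun x hx => mem_image_of_mem _ hx
  have hcard : S.card = ∑ p ∈ AB, (S.filter (fun x => f1 x = p)).card :=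
    card_eq_sum_card_fiberwise hmem
  set T := (S ×ˢ S).filter (fun q => f1 q.1 = f1 q.2) with hT
  have hTmem : ∀ q ∈ T, f1 q.1 ∈ AB := by
    intro q hq
    simp only [hT, mem_filter, mem_product] at hq
    exact hmem _ hq.1.1
  have hTcard : T.card = ∑ p ∈ AB, (S.filter (fun x => f1 x = p)).card ^ 2 := by
    rw [card_eq_sum_card_fiberwise hTmem]
    refine Finset.sum_congr rfl ?_
    intro p hp
    have : T.filter (fun q => f1 q.1 = p)
        = (S.filter (fun x => f1 x = p)) ×ˢ (S.filter (fun x => f1 x = p)) := by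
      ext q
      constructor
      · intro h
        obtain ⟨h1, h4⟩ := mem_filter.mp h
        obtain ⟨h2, h3⟩ := mem_filter.mp h1
        obtain ⟨h5, h6⟩ := mem_product.mp h2
        exact mem_product.mpr ⟨mem_filter.mpr ⟨h5, h3 ▸ h4⟩, mem_filter.mpr ⟨h6, h3 ▸ h4 ▸ rfl⟩⟩
      · intro h
        obtain ⟨h1, h2⟩ := mem_product.mp h
        obtain ⟨h3, h4⟩ := mem_filter.mp h1
        obtain ⟨h5, h6⟩ := mem_filter.mp h2
        exact mem_filter.mpr ⟨mem_filter.mpr ⟨mem_product.mpr ⟨h3, h5⟩, h4.trans h6.symm⟩, h4⟩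
    rw [this, card_product, sq]
  have hTle : T.card ≤ BC.card * AC.card := by
    rw [← card_product]
    apply card_le_card_of_injOn
      (fun q => ((q.1.2.1, q.1.2.2), (q.2.1, q.2.2.2)))
    · intro q hq
      obtain ⟨h1, _⟩ := mem_filter.mp hq
      obtain ⟨h2, h3⟩ := mem_product.mp h1
      exact mem_product.mpr ⟨mem_image_of_mem _ h2, mem_image_of_mem _ h3⟩
    · intro q hq r hr hqr
      obtain ⟨-, hq2⟩ := mem_filter.mp hq
      obtain ⟨-, hr2⟩ := mem_filter.mp hr
      obtain ⟨⟨a, b, c⟩, ⟨a', b', c'⟩⟩ := q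
      obtain ⟨⟨x, y, z⟩, ⟨x', y', z'⟩⟩ := r
      simp only [hf1, Prod.mk.injEq] at hq2 hr2 hqr
      obtain ⟨ha, hb⟩ := hq2
      obtain ⟨hx, hy⟩ := hr2
      obtain ⟨⟨e1, e2⟩, e3, e4⟩ := hqr
      simp_all
  -- Cauchy–Schwarz (in ℤ, then cast back)
  have hCS : S.card ^ 2 ≤ AB.card * T.card := by
    have := sq_sum_le_card_mul_sum_sq (s := AB)
      (f := fun p => ((S.filter (fun x => f1 x = p)).card : ℤ))
    have h2 : ((S.card : ℤ)) ^ 2 ≤ (AB.card : ℤ) * (T.card : ℤ) := by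
      rw [hcard, hTcard]
      push_cast
      exact this
    exact_mod_cast h2
  calc S.card ^ 2 ≤ AB.card * T.card := hCS
    _ ≤ AB.card * (BC.card * AC.card) := Nat.mul_le_mul_left _ hTle
    _ = AB.card * BC.card * AC.card := (mul_assoc _ _ _).symm
end

section
/- Let k ≥ 4 be even and N a perfect square. There exists an instance of the k-cycle join query R₁(x₁,x₂) ⋈ R₂(x₂,x₃) ⋈ ⋯ ⋈ R_k(x_k,x₁) in which each relation has exactly N tuples and the number of join results is exactly N^(k/2). -/
theorem even_cycle_agm_tight (k N : ℕ) [NeZero k] (hk : 4 ≤ k) (hke : Even k)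
    (hN : ∃ m, N = m ^ 2) :
    ∃ (D : Type) (_ : Fintype D) (_ : DecidableEq D)
      (R : Fin k → Finset (D × D)),
      (∀ i, (R i).card = N) ∧
        (Finset.univ.filter
            (fun t : Fin k → D => ∀ i, (t i, t (i + 1)) ∈ R i)).card =
          N ^ (k / 2) := by
  obtain ⟨m, rfl⟩ := hN
  refine ⟨Fin m, inferInstance, inferInstance, fun _ => Finset.univ, ?_, ?_⟩
  · intro i
    simp [sq, Finset.card_univ]
  · have h : (Finset.univ.filter
        (fun t : Fin k → Fin m => ∀ i, (t i, t (i + 1)) ∈ (Finset.univ : Finset (Fin m × Fin m)))) = Finset.univ := by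
      simp
    rw [h, Finset.card_univ, Fintype.card_fun, Fintype.card_fin, Fintype.card_fin,
      ← pow_mul]
    obtain ⟨c, rfl⟩ := hke
    congr 1
    omega
end

section
/- Let A, B, C be types, R₃ a finite subset of A × B, and d₁ : B → ℝ≥0, d₂ : A → ℝ≥0. Then Σ_{(a,b)∈R₃} √(d₁(b)·d₂(a)) ≤ √(|R₃|) · √(Σ_{(a,b)∈R₃} d₁(b)·d₂(a)), and Σ_{(a,b)∈R₃} d₁(b)·d₂(a) ≤ (Σ_{b∈π_B R₃} d₁(b)) · (Σ_{a∈π_A R₃} d₂(a)). Consequently Σ_{(a,b)∈R₃} √(d₁(b)·d₂(a)) ≤ √(|R₃| · (Σ_{b∈π_B R₃} d₁(b)) · (Σ_{a∈π_A R₃} d₂(a))). -/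
theorem triangle_query_decomposition {A B : Type*} [DecidableEq A]
    [DecidableEq B] (R₃ : Finset (A × B)) (d₁ : B → ℝ) (d₂ : A → ℝ)
    (hd₁ : ∀ b, 0 ≤ d₁ b) (hd₂ : ∀ a, 0 ≤ d₂ a) :
    (∑ p ∈ R₃, Real.sqrt (d₁ p.2 * d₂ p.1) ≤
        Real.sqrt (R₃.card : ℝ) *
          Real.sqrt (∑ p ∈ R₃, d₁ p.2 * d₂ p.1)) ∧
      (∑ p ∈ R₃, d₁ p.2 * d₂ p.1 ≤
        (∑ b ∈ R₃.image Prod.snd, d₁ b) * (∑ a ∈ R₃.image Prod.fst, d₂ a)) ∧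
      ∑ p ∈ R₃, Real.sqrt (d₁ p.2 * d₂ p.1) ≤
        Real.sqrt ((R₃.card : ℝ) * (∑ b ∈ R₃.image Prod.snd, d₁ b) *
          (∑ a ∈ R₃.image Prod.fst, d₂ a)) := by
  have h1 : ∑ p ∈ R₃, Real.sqrt (d₁ p.2 * d₂ p.1) ≤
      Real.sqrt (R₃.card : ℝ) * Real.sqrt (∑ p ∈ R₃, d₁ p.2 * d₂ p.1) := by
    have hsq : (∑ p ∈ R₃, Real.sqrt (d₁ p.2 * d₂ p.1)) ^ 2 ≤
        (R₃.card : ℝ) * ∑ p ∈ R₃, d₁ p.2 * d₂ p.1 := by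
      have := sq_sum_le_card_mul_sum_sq (s := R₃)
        (f := fun p => Real.sqrt (d₁ p.2 * d₂ p.1))
      refine this.trans_eq ?_
      congr 1
      refine Finset.sum_congr rfl fun p _ => ?_
      rw [Real.sq_sqrt (mul_nonneg (hd₁ _) (hd₂ _))]
    have hnn : 0 ≤ ∑ p ∈ R₃, Real.sqrt (d₁ p.2 * d₂ p.1) :=
      Finset.sum_nonneg fun p _ => Real.sqrt_nonneg _
    calc ∑ p ∈ R₃, Real.sqrt (d₁ p.2 * d₂ p.1)
        = Real.sqrt ((∑ p ∈ R₃, Real.sqrt (d₁ p.2 * d₂ p.1)) ^ 2) :=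
          (Real.sqrt_sq hnn).symm
      _ ≤ Real.sqrt ((R₃.card : ℝ) * ∑ p ∈ R₃, d₁ p.2 * d₂ p.1) :=
          Real.sqrt_le_sqrt hsq
      _ = _ := Real.sqrt_mul (Nat.cast_nonneg _) _
  have h2 : ∑ p ∈ R₃, d₁ p.2 * d₂ p.1 ≤
      (∑ b ∈ R₃.image Prod.snd, d₁ b) * (∑ a ∈ R₃.image Prod.fst, d₂ a) := by
    rw [Finset.sum_mul_sum]
    have hsub : R₃ ⊆ ((R₃.image Prod.snd) ×ˢ (R₃.image Prod.fst)).image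
        (fun q => (q.2, q.1)) := by
      intro p hp
      refine Finset.mem_image.2 ⟨(p.2, p.1), ?_, rfl⟩
      exact Finset.mem_product.2 ⟨Finset.mem_image_of_mem _ hp,
        Finset.mem_image_of_mem _ hp⟩
    calc ∑ p ∈ R₃, d₁ p.2 * d₂ p.1
        ≤ ∑ p ∈ ((R₃.image Prod.snd) ×ˢ (R₃.image Prod.fst)).image
            (fun q => (q.2, q.1)), d₁ p.2 * d₂ p.1 :=
          Finset.sum_le_sum_of_subset_of_nonneg hsub
            (fun p _ _ => mul_nonneg (hd₁ _) (hd₂ _))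
      _ = ∑ q ∈ (R₃.image Prod.snd) ×ˢ (R₃.image Prod.fst), d₁ q.1 * d₂ q.2 := by
          rw [Finset.sum_image]
          intro x _ y _ h
          exact Prod.ext (congrArg Prod.snd h) (congrArg Prod.fst h)
      _ = ∑ b ∈ R₃.image Prod.snd, ∑ a ∈ R₃.image Prod.fst, d₁ b * d₂ a :=
          Finset.sum_product ..
  refine ⟨h1, h2, ?_⟩
  calc ∑ p ∈ R₃, Real.sqrt (d₁ p.2 * d₂ p.1)
      ≤ Real.sqrt (R₃.card : ℝ) * Real.sqrt (∑ p ∈ R₃, d₁ p.2 * d₂ p.1) := h1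
    _ ≤ Real.sqrt (R₃.card : ℝ) *
        Real.sqrt ((∑ b ∈ R₃.image Prod.snd, d₁ b) *
          (∑ a ∈ R₃.image Prod.fst, d₂ a)) :=
        mul_le_mul_of_nonneg_left (Real.sqrt_le_sqrt h2) (Real.sqrt_nonneg _)
    _ = _ := by
        rw [← Real.sqrt_mul (Nat.cast_nonneg _), mul_assoc]
end

section
/- Let A be a finite set, f, g : A → ℝ≥0, and m ≥ 0 a real. Suppose Σ_{a∈A} f(a) ≤ N, Σ_{a∈A} g(a) ≤ N, and m ≤ N for some real N ≥ 0. Then Σ_{a∈A} √(f(a)·g(a)·m) ≤ N^(3/2). -/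
theorem sum_sqrt_mul_mul_le_rpow {A : Type*} (s : Finset A)
    (f g : A → ℝ) (m N : ℝ)
    (hf : ∀ a ∈ s, 0 ≤ f a) (hg : ∀ a ∈ s, 0 ≤ g a)
    (hm : 0 ≤ m) (hN : 0 ≤ N)
    (hsf : ∑ a ∈ s, f a ≤ N) (hsg : ∑ a ∈ s, g a ≤ N) (hmN : m ≤ N) :
    ∑ a ∈ s, Real.sqrt (f a * g a * m) ≤ N ^ ((3 : ℝ) / 2) := by
  set F : A → ℝ := fun a => f a ⊔ 0 with hF
  set G : A → ℝ := fun a => g a ⊔ 0 with hG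
  have hFn : ∀ a, 0 ≤ F a := fun a => le_max_right _ _
  have hGn : ∀ a, 0 ≤ G a := fun a => le_max_right _ _
  have key : ∑ a ∈ s, Real.sqrt (F a) * Real.sqrt (G a)
      ≤ Real.sqrt (∑ a ∈ s, F a) * Real.sqrt (∑ a ∈ s, G a) :=
    Real.sum_sqrt_mul_sqrt_le s hFn hGn
  have hsumF : ∑ a ∈ s, F a = ∑ a ∈ s, f a :=
    Finset.sum_congr rfl fun a ha => max_eq_left (hf a ha)
  have hsumG : ∑ a ∈ s, G a = ∑ a ∈ s, g a :=
    Finset.sum_congr rfl fun a ha => max_eq_left (hg a ha)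
  have step1 : ∑ a ∈ s, Real.sqrt (f a * g a * m)
      = Real.sqrt m * ∑ a ∈ s, Real.sqrt (F a) * Real.sqrt (G a) := by
    rw [Finset.mul_sum]
    refine Finset.sum_congr rfl fun a ha => ?_
    simp only [hF, hG, max_eq_left (hf a ha), max_eq_left (hg a ha)]
    rw [Real.sqrt_mul (mul_nonneg (hf a ha) (hg a ha)), Real.sqrt_mul (hf a ha)]
    ring
  calc ∑ a ∈ s, Real.sqrt (f a * g a * m)
      ≤ Real.sqrt m * (Real.sqrt (∑ a ∈ s, f a) * Real.sqrt (∑ a ∈ s, g a)) := by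
        rw [step1]
        exact mul_le_mul_of_nonneg_left (by rw [← hsumF, ← hsumG]; exact key)
          (Real.sqrt_nonneg m)
    _ ≤ Real.sqrt N * (Real.sqrt N * Real.sqrt N) := by
        gcongr <;> first
          | exact Real.sqrt_le_sqrt hmN
          | exact Real.sqrt_le_sqrt hsf
          | exact Real.sqrt_le_sqrt hsg
    _ = N ^ ((3 : ℝ) / 2) := by
        rw [Real.sqrt_eq_rpow, ← Real.rpow_add' hN (by norm_num),
          ← Real.rpow_add' hN (by norm_num)]
        norm_num
end
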